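/- For all positive integers i and j, h_i·h_j − h_{i+j} < 0, where h_n = ζ(2n)·(2^{2n} − 2)/π^{2n}. -/
import Mathlib

open Real

/-- The Riemann zeta function for real arguments `s > 1`,
defined as `∑_{n=1}^∞ n^{-s}`. -/
noncomputable def zetaR (s : ℝ) : ℝ := ∑' n : ℕ, ((n : ℝ) + 1) ^ (-s)

/-- `h_n = ζ(2n)·(2^{2n} − 2)/π^{2n}`, the coefficient of `p_n` in the
Hirzebruch L-polynomial `L_n`. -/
noncomputable def hCoeff (n : ℕ) : ℝ :=
  zetaR (2 * n) * ((2 : ℝ) ^ (2 * n) - 2) / Real.pi ^ (2 * n)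

private lemma Zdef (m : ℕ) :
    zetaR (2 * m) = ∑' k : ℕ, 1 / ((k : ℝ) + 1) ^ (2 * m) := by
  unfold zetaR
  refine tsum_congr fun k => ?_
  have h1 : (0:ℝ) ≤ (k:ℝ) + 1 := by positivity
  rw [show -(2 * (m:ℝ)) = -((2*m : ℕ) : ℝ) by push_cast; ring,
    Real.rpow_neg h1, Real.rpow_natCast, one_div]

private lemma sumZ (m : ℕ) (hm : 1 ≤ m) :
    Summable fun k : ℕ => 1 / ((k : ℝ) + 1) ^ (2 * m) := by
  have h : Summable fun k : ℕ => 1 / (k : ℝ) ^ (2 * m) :=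
    Real.summable_one_div_nat_pow.mpr (by omega)
  have h2 := (summable_nat_add_iff 1).mpr h
  exact h2.congr fun k => by push_cast; norm_num

private lemma sumZ2 (m : ℕ) (hm : 1 ≤ m) :
    Summable fun k : ℕ => 1 / ((k : ℝ) + 2) ^ (2 * m) := by
  have := (summable_nat_add_iff 1).mpr (sumZ m hm)
  exact this.congr fun k => by push_cast; ring_nf

private lemma sumZ3 (m : ℕ) (hm : 1 ≤ m) :
    Summable fun k : ℕ => 1 / ((k : ℝ) + 3) ^ (2 * m) := by
  have := (summable_nat_add_iff 1).mpr (sumZ2 m hm)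
  exact this.congr fun k => by push_cast; ring_nf

private lemma sum2 : Summable fun k : ℕ => 1 / ((k : ℝ) + 1) ^ 2 := by
  simpa using sumZ 1 le_rfl

private lemma sum2' : Summable fun k : ℕ => 1 / ((k : ℝ) + 2) ^ 2 := by
  simpa using sumZ2 1 le_rfl

private lemma sum2'' : Summable fun k : ℕ => 1 / ((k : ℝ) + 3) ^ 2 := by
  simpa using sumZ3 1 le_rfl

private lemma basel1 : ∑' k : ℕ, 1 / ((k : ℝ) + 1) ^ 2 = π ^ 2 / 6 := by
  have h := hasSum_zeta_two
  have hs : Summable fun n : ℕ => 1 / (n : ℝ) ^ 2 := h.summable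
  have h0 := Summable.tsum_eq_zero_add hs
  rw [h.tsum_eq] at h0
  have h1 : ∑' k : ℕ, (1:ℝ) / ((k + 1 : ℕ) : ℝ) ^ 2 = ∑' k : ℕ, 1 / ((k : ℝ) + 1) ^ 2 :=
    tsum_congr fun k => by push_cast; ring_nf
  rw [h1] at h0
  norm_num at h0
  rw [h0]
  exact tsum_congr fun k => one_div _

private lemma basel2 : ∑' k : ℕ, 1 / ((k : ℝ) + 2) ^ 2 = π ^ 2 / 6 - 1 := by
  have h0 := Summable.tsum_eq_zero_add sum2
  rw [basel1] at h0
  have h1 : ∑' k : ℕ, (1:ℝ) / (((k + 1 : ℕ) : ℝ) + 1) ^ 2 = ∑' k : ℕ, 1 / ((k : ℝ) + 2) ^ 2 :=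
    tsum_congr fun k => by push_cast; ring_nf
  rw [h1] at h0
  norm_num at h0
  have h2 : ∑' k : ℕ, (1:ℝ) / ((k:ℝ)+2)^2 = ∑' k : ℕ, (((k:ℝ)+2)^2)⁻¹ :=
    tsum_congr fun k => one_div _
  rw [h2]
  linarith [h0]

private lemma basel3 : ∑' k : ℕ, 1 / ((k : ℝ) + 3) ^ 2 = π ^ 2 / 6 - 1 - 1/4 := by
  have h0 := Summable.tsum_eq_zero_add sum2'
  rw [basel2] at h0
  have h1 : ∑' k : ℕ, (1:ℝ) / (((k + 1 : ℕ) : ℝ) + 2) ^ 2 = ∑' k : ℕ, 1 / ((k : ℝ) + 3) ^ 2 :=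
    tsum_congr fun k => by push_cast; ring_nf
  rw [h1] at h0
  norm_num at h0
  have h2 : ∑' k : ℕ, (1:ℝ) / ((k:ℝ)+3)^2 = ∑' k : ℕ, (((k:ℝ)+3)^2)⁻¹ :=
    tsum_congr fun k => one_div _
  rw [h2]
  linarith [h0]

private lemma one_lt_Z (m : ℕ) (hm : 1 ≤ m) : 1 < zetaR (2 * m) := by
  rw [Zdef]
  have hs := sumZ m hm
  rw [Summable.tsum_eq_zero_add hs]
  have h1 : ∑' k : ℕ, (1:ℝ) / (((k + 1 : ℕ) : ℝ) + 1) ^ (2*m) =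
      ∑' k : ℕ, 1 / ((k : ℝ) + 2) ^ (2*m) :=
    tsum_congr fun k => by push_cast; ring_nf
  rw [h1]
  have hpos : 0 < ∑' k : ℕ, 1 / ((k : ℝ) + 2) ^ (2*m) :=
    Summable.tsum_pos (sumZ2 m hm) (fun k => by positivity) 0 (by positivity)
  have h0 : (1 : ℝ) / (((0:ℕ):ℝ) + 1) ^ (2*m) = 1 := by norm_num
  rw [h0]
  linarith

private lemma Z_two : zetaR 2 = π ^ 2 / 6 := by
  have h := Zdef 1
  norm_num at h
  rw [h, ← basel1]
  exact tsum_congr fun k => (one_div _).symm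

-- tail bound: for m ≥ 2, zetaR (2m) ≤ 1 + 2/4^m
private lemma Z_le (m : ℕ) (hm : 2 ≤ m) : zetaR (2 * m) ≤ 1 + 2 / 4 ^ m := by
  have hm1 : 1 ≤ m := le_trans one_le_two hm
  rw [Zdef]
  rw [Summable.tsum_eq_zero_add (sumZ m hm1)]
  have h1 : ∑' k : ℕ, (1:ℝ) / (((k + 1 : ℕ) : ℝ) + 1) ^ (2*m) =
      ∑' k : ℕ, 1 / ((k : ℝ) + 2) ^ (2*m) :=
    tsum_congr fun k => by push_cast; ring_nf
  rw [h1, Summable.tsum_eq_zero_add (sumZ2 m hm1)]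
  have h2 : ∑' k : ℕ, (1:ℝ) / (((k + 1 : ℕ) : ℝ) + 2) ^ (2*m) =
      ∑' k : ℕ, 1 / ((k : ℝ) + 3) ^ (2*m) :=
    tsum_congr fun k => by push_cast; ring_nf
  rw [h2]
  have hterm : ∀ k : ℕ, 1 / ((k : ℝ) + 3) ^ (2*m) ≤
      (1 / 9 ^ (m-1)) * (1 / ((k:ℝ) + 3) ^ 2) := by
    intro k
    have hk0 : (0:ℝ) ≤ (k:ℝ) := Nat.cast_nonneg k
    have hk3 : (3:ℝ) ≤ (k:ℝ) + 3 := by linarith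
    have hb : ((k:ℝ) + 3) ^ (2*m) = (((k:ℝ)+3)^2) ^ m := by rw [← pow_mul]
    have h9 : (9:ℝ) ≤ ((k:ℝ)+3)^2 := by nlinarith
    have hge : 9 ^ (m-1) * ((k:ℝ)+3)^2 ≤ ((k:ℝ)+3) ^ (2*m) := by
      have h' : (9:ℝ) ^ (m-1) ≤ (((k:ℝ)+3)^2) ^ (m-1) :=
        pow_le_pow_left₀ (by norm_num) h9 _
      have hm' : ((((k:ℝ)+3)^2)) ^ m = (((k:ℝ)+3)^2) ^ (m-1) * ((k:ℝ)+3)^2 := by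
        rw [← pow_succ]; congr 1; omega
      rw [hb, hm']
      exact mul_le_mul_of_nonneg_right h' (sq_nonneg _)
    have hpos9 : (0:ℝ) < 9 ^ (m-1) * ((k:ℝ)+3)^2 := by positivity
    calc 1 / ((k:ℝ)+3) ^ (2*m) ≤ 1 / (9 ^ (m-1) * ((k:ℝ)+3)^2) :=
          one_div_le_one_div_of_le hpos9 hge
      _ = (1 / 9 ^ (m-1)) * (1 / ((k:ℝ) + 3) ^ 2) := by rw [div_mul_div_comm, one_mul]
  have htail : ∑' k : ℕ, 1 / ((k : ℝ) + 3) ^ (2*m) ≤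
      (1 / 9 ^ (m-1)) * (π ^ 2 / 6 - 1 - 1/4) := by
    calc ∑' k : ℕ, 1 / ((k : ℝ) + 3) ^ (2*m)
        ≤ ∑' k : ℕ, (1 / 9 ^ (m-1)) * (1 / ((k:ℝ) + 3) ^ 2) :=
          Summable.tsum_le_tsum hterm (sumZ3 m hm1) (sum2''.mul_left _)
      _ = (1 / 9 ^ (m-1)) * (π ^ 2 / 6 - 1 - 1/4) := by rw [tsum_mul_left, basel3]
  have hfirst : (1 : ℝ) / (((0:ℕ):ℝ) + 1) ^ (2*m) = 1 := by norm_num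
  have hsecond : (1 : ℝ) / (((0:ℕ):ℝ) + 2) ^ (2*m) = 1 / 4 ^ m := by
    rw [pow_mul]
    norm_num
  rw [hfirst, hsecond]
  -- numeric: 1 + (1/4^m + tail) ≤ 1 + 2/4^m, i.e. tail ≤ 1/4^m
  have hnum : (1 / (9:ℝ) ^ (m-1)) * (π ^ 2 / 6 - 1 - 1/4) ≤ 1 / 4 ^ m := by
    have hpi : π ^ 2 / 6 - 1 - 1/4 ≤ 41/100 := by nlinarith [pi_lt_d2, pi_pos]
    have hpi0 : 0 ≤ π ^ 2 / 6 - 1 - 1/4 := by nlinarith [pi_gt_three]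
    have h94 : ((9:ℝ)/4) ^ 2 ≤ ((9:ℝ)/4) ^ m := pow_le_pow_right₀ (by norm_num) hm
    have h9m : (9:ℝ) ^ m = ((9:ℝ)/4) ^ m * 4 ^ m := by
      rw [← mul_pow]; norm_num
    have h91 : (9:ℝ) ^ m = 9 ^ (m-1) * 9 := by
      rw [← pow_succ]; congr 1; omega
    have h4pos : (0:ℝ) < 4 ^ m := by positivity
    have h9pos : (0:ℝ) < (9:ℝ) ^ (m-1) := by positivity
    rw [div_mul_eq_mul_div, one_mul, div_le_div_iff₀ h9pos h4pos]
    -- (π²/6 - 5/4) * 4^m ≤ 1 * 9^(m-1)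
    have hkey : (41/100 : ℝ) * 4 ^ m ≤ 9 ^ (m-1) := by
      have : ((81:ℝ)/16) * 4 ^ m ≤ 9 ^ m := by
        rw [h9m]; nlinarith [h94, h4pos]
      rw [h91] at this
      nlinarith [h9pos]
    nlinarith [hpi, hpi0, h4pos, hkey]
  have h24 : (2:ℝ) / 4 ^ m = 1 / 4 ^ m + 1 / 4 ^ m := by ring
  linarith [htail, hnum]

private lemma hCoeff_eq (m : ℕ) :
    hCoeff m = zetaR (2 * m) * ((4:ℝ) ^ m - 2) / π ^ (2 * m) := by
  unfold hCoeff
  norm_num [pow_mul]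

private lemma bound2 (m : ℕ) (hm : 2 ≤ m) :
    zetaR (2 * m) * ((4:ℝ) ^ m - 2) * 4 ^ m ≤ 4 ^ m * 4 ^ m - 4 := by
  have hz := Z_le m hm
  have h16 : (16:ℝ) ≤ 4 ^ m := by
    calc (16:ℝ) = 4 ^ 2 := by norm_num
    _ ≤ 4 ^ m := pow_le_pow_right₀ (by norm_num) hm
  have h4pos : (0:ℝ) < 4 ^ m := by positivity
  have hz4 : zetaR (2 * m) * 4 ^ m ≤ 4 ^ m + 2 := by
    have := mul_le_mul_of_nonneg_right hz (le_of_lt h4pos)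
    calc zetaR (2 * m) * 4 ^ m ≤ (1 + 2 / 4 ^ m) * 4 ^ m := this
      _ = 4 ^ m + 2 := by field_simp
  nlinarith [hz4, h16, one_lt_Z m (by omega)]

private lemma bound1 : zetaR (2 * (1:ℕ)) * ((4:ℝ) ^ (1:ℕ) - 2) < 83/25 := by
  have h : zetaR (2 * (1:ℕ)) = π ^ 2 / 6 := by
    rw [show ((2:ℝ) * ((1:ℕ):ℝ)) = 2 by norm_num, Z_two]
  rw [h]
  nlinarith [pi_lt_d2, pi_pos]

private lemma key (i j : ℕ) (hij : 1 ≤ i) (hji : i ≤ j) :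
    zetaR (2 * i) * ((4:ℝ) ^ i - 2) * (zetaR (2 * j) * ((4:ℝ) ^ j - 2)) ≤
      (4:ℝ) ^ (i + j) - 2 := by
  have hj1 : 1 ≤ j := le_trans hij hji
  have hxpos : (0:ℝ) < 4 ^ i := by positivity
  have hypos : (0:ℝ) < 4 ^ j := by positivity
  have hx4 : (4:ℝ) ≤ 4 ^ i := by
    calc (4:ℝ) = 4 ^ 1 := (pow_one 4).symm
    _ ≤ 4 ^ i := pow_le_pow_right₀ (by norm_num) hij
  have hy4 : (4:ℝ) ≤ 4 ^ j := by
    calc (4:ℝ) = 4 ^ 1 := (pow_one 4).symm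
    _ ≤ 4 ^ j := pow_le_pow_right₀ (by norm_num) hj1
  have hA1 : 1 < zetaR (2 * i) := one_lt_Z i hij
  have hB1 : 1 < zetaR (2 * j) := one_lt_Z j hj1
  have hXY : (4:ℝ) ^ (i + j) = 4 ^ i * 4 ^ j := pow_add 4 i j
  rcases Nat.lt_or_ge i 2 with h2 | h2
  · -- i = 1
    have hi1 : i = 1 := by omega
    subst hi1
    rcases Nat.lt_or_ge j 2 with hj2 | hj2
    · -- j = 1
      have hj1' : j = 1 := by omega
      subst hj1'
      have b1 := bound1
      have hz1 : 1 < zetaR (2 * ((1:ℕ):ℝ)) := one_lt_Z 1 le_rfl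
      norm_num at b1 hz1 ⊢
      nlinarith [b1, hz1]
    · -- j ≥ 2
      have hbj := bound2 j hj2
      have hy16 : (16:ℝ) ≤ 4 ^ j := by
        calc (16:ℝ) = 4 ^ 2 := by norm_num
        _ ≤ 4 ^ j := pow_le_pow_right₀ (by norm_num) hj2
      have hBj : zetaR (2 * j) * ((4:ℝ) ^ j - 2) ≤ 4 ^ j := by
        have h' : zetaR (2 * j) * ((4:ℝ) ^ j - 2) * 4 ^ j ≤ 4 ^ j * 4 ^ j := by
          nlinarith [hbj]
        exact le_of_mul_le_mul_right h' hypos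
      have hBj0 : 0 ≤ zetaR (2 * j) * ((4:ℝ) ^ j - 2) := by nlinarith
      have b1 := bound1
      have hfin := mul_le_mul (le_of_lt b1) hBj hBj0 (by norm_num : (0:ℝ) ≤ 83/25)
      have hpow : (4:ℝ) ^ (1 + j) = 4 * 4 ^ j := by rw [pow_add]; norm_num
      rw [hpow]
      exact le_trans hfin (by linarith)
  · -- i ≥ 2 (hence j ≥ 2)
    have hj2 : 2 ≤ j := le_trans h2 hji
    have hbi := bound2 i h2
    have hbj := bound2 j hj2
    have hx16 : (16:ℝ) ≤ 4 ^ i := by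
      calc (16:ℝ) = 4 ^ 2 := by norm_num
      _ ≤ 4 ^ i := pow_le_pow_right₀ (by norm_num) h2
    have hy16 : (16:ℝ) ≤ 4 ^ j := by
      calc (16:ℝ) = 4 ^ 2 := by norm_num
      _ ≤ 4 ^ j := pow_le_pow_right₀ (by norm_num) hj2
    have hAipos : 0 < zetaR (2 * i) * ((4:ℝ) ^ i - 2) * 4 ^ i := by
      apply mul_pos (mul_pos (by linarith) (by linarith)) hxpos
    have hmul : (zetaR (2 * i) * ((4:ℝ) ^ i - 2) * 4 ^ i) *
        (zetaR (2 * j) * ((4:ℝ) ^ j - 2) * 4 ^ j) ≤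
        (4 ^ i * 4 ^ i - 4) * (4 ^ j * 4 ^ j - 4) := by
      apply mul_le_mul hbi hbj ?_ (by nlinarith)
      apply le_of_lt
      apply mul_pos (mul_pos (by linarith) (by linarith)) hypos
    have hfin : ((4:ℝ) ^ i * 4 ^ i - 4) * (4 ^ j * 4 ^ j - 4) ≤
        ((4:ℝ) ^ i * 4 ^ j - 2) * (4 ^ i * 4 ^ j) := by
      nlinarith [sq_nonneg ((4:ℝ) ^ i - 4 ^ j), hx16, hy16, mul_pos hxpos hypos,
        mul_le_mul hx16 hy16 (by norm_num) (le_of_lt hxpos)]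
    have hxy : (0:ℝ) < 4 ^ i * 4 ^ j := mul_pos hxpos hypos
    have hdiv : zetaR (2 * i) * ((4:ℝ) ^ i - 2) * (zetaR (2 * j) * ((4:ℝ) ^ j - 2)) *
        (4 ^ i * 4 ^ j) ≤ ((4:ℝ) ^ i * 4 ^ j - 2) * (4 ^ i * 4 ^ j) := by
      calc zetaR (2 * i) * ((4:ℝ) ^ i - 2) * (zetaR (2 * j) * ((4:ℝ) ^ j - 2)) *
            (4 ^ i * 4 ^ j)
          = (zetaR (2 * i) * ((4:ℝ) ^ i - 2) * 4 ^ i) *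
            (zetaR (2 * j) * ((4:ℝ) ^ j - 2) * 4 ^ j) := by ring
        _ ≤ (4 ^ i * 4 ^ i - 4) * (4 ^ j * 4 ^ j - 4) := hmul
        _ ≤ ((4:ℝ) ^ i * 4 ^ j - 2) * (4 ^ i * 4 ^ j) := hfin
    rw [hXY]
    exact le_of_mul_le_mul_right hdiv hxy

/-- Lemma A.1 (Galatius): for all positive integers `i, j`,
`h_i·h_j − h_{i+j} < 0`. -/
theorem hCoeff_mul_sub_lt (i j : ℕ) (hi : 1 ≤ i) (hj : 1 ≤ j) :
    hCoeff i * hCoeff j - hCoeff (i + j) < 0 := by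
  rw [sub_neg, hCoeff_eq, hCoeff_eq, hCoeff_eq, div_mul_div_comm, ← pow_add,
    show 2*i + 2*j = 2*(i+j) by ring]
  have hpi : (0:ℝ) < π ^ (2*(i+j)) := by positivity
  rw [div_lt_div_iff_of_pos_right hpi]
  have hC1 : 1 < zetaR (2 * ((i + j : ℕ) : ℝ)) := one_lt_Z (i+j) (by omega)
  have hn2 : (0:ℝ) < (4:ℝ) ^ (i+j) - 2 := by
    have : (4:ℝ) ≤ 4 ^ (i+j) := by
      calc (4:ℝ) = 4 ^ 1 := (pow_one 4).symm
      _ ≤ 4 ^ (i+j) := pow_le_pow_right₀ (by norm_num) (by omega)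
    linarith
  have hkey : zetaR (2 * i) * ((4:ℝ) ^ i - 2) * (zetaR (2 * j) * ((4:ℝ) ^ j - 2)) ≤
      (4:ℝ) ^ (i + j) - 2 := by
    rcases le_total i j with h | h
    · exact key i j hi h
    · have := key j i hj h
      rw [show j + i = i + j by ring] at this
      linarith [this, mul_comm (zetaR (2 * (j:ℕ)) * ((4:ℝ) ^ j - 2))
        (zetaR (2 * (i:ℕ)) * ((4:ℝ) ^ i - 2))]
  calc zetaR (2 * (i:ℕ)) * ((4:ℝ) ^ i - 2) * (zetaR (2 * (j:ℕ)) * ((4:ℝ) ^ j - 2))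
      ≤ (4:ℝ) ^ (i + j) - 2 := hkey
    _ < zetaR (2 * ((i + j : ℕ) : ℝ)) * ((4:ℝ) ^ (i+j) - 2) := by nlinarith [hC1, hn2]
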